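/- Fix a power of two n, a power of two B dividing n, an integer F ≥ 2, and an (n,B,F)-flat filter G. Let π be any approximately pairwise-independent random permutation of [n], and for f, f' ∈ [n] define o_f(f') = π(f') − (n/B)·round(π(f)·B/n), where round(x) is a nearest integer to x. Then for every X ∈ ℂ^n and every f ∈ [n]: Σ_{f'∈[n], f'≠f} |X̂_{f'}|² · E_π[|Ĝ_{o_f(f')}|²] ≤ (10/B)·‖X̂‖₂². -/

import Mathlib

open Finset

/-- Discrete Fourier transform of a length-`n` signal, with `1/n` normalization. -/
noncomputable def dft (n : ℕ) [NeZero n] (X : ZMod n → ℂ) : ZMod n → ℂ :=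
  fun f => (n : ℂ)⁻¹ * ∑ t : ZMod n, X t *
    Complex.exp (-(2 * Real.pi * Complex.I) * ((f * t).val : ℂ) / (n : ℂ))

/-- Circular (modulo-`n`) distance of an index to `0`. -/
def cdist (n : ℕ) (x : ZMod n) : ℕ := min x.val (n - x.val)

/-- The (real) Fourier transform of a real-valued filter. -/
noncomputable def fhat (n : ℕ) [NeZero n] (G : ZMod n → ℝ) (f : ZMod n) : ℝ :=
  (dft n (fun t => ((G t : ℝ) : ℂ)) f).re

/-- `G` is an `(n,B,F)`-flat filter. -/
structure IsFlatFilter (n B F : ℕ) [NeZero n] (G : ZMod n → ℝ) : Prop where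
  realFT : ∀ f, (dft n (fun t => ((G t : ℝ) : ℂ)) f).im = 0
  symm : ∀ f, fhat n G (-f) = fhat n G f
  nonneg : ∀ f, 0 ≤ fhat n G f
  le_one : ∀ f, fhat n G f ≤ 1
  pass : ∀ f : ZMod n, (cdist n f : ℝ) ≤ (n : ℝ) / (2 * B) →
    1 - (1 / 4 : ℝ) ^ (F - 1) ≤ fhat n G f
  decay : ∀ f : ZMod n, (n : ℝ) / B ≤ (cdist n f : ℝ) →
    fhat n G f ≤ (1 / 4 : ℝ) ^ (F - 1) * ((n : ℝ) / (B * cdist n f)) ^ (F - 1)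

/-- `(n/B) · round(x·B/n)` computed modulo `n` (the nearest multiple of `n/B`). -/
noncomputable def roundMul (n B : ℕ) (x : ZMod n) : ZMod n :=
  ((n / B : ℕ) : ZMod n) * ((round ((x.val : ℚ) * B / n) : ℤ) : ZMod n)

/-- `o_f(f') = π(f') − (n/B)·round(π(f)·B/n)`, given the permuted values `pf = π(f)`,
`pf' = π(f')`. -/
noncomputable def offset (n B : ℕ) (pf pf' : ZMod n) : ZMod n :=
  pf' - roundMul n B pf


/-! Write `d = |π(f) − π(f')|` and `s = n/B`. Rounding moves `π(f)` by at most `s/2`, so the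
offset satisfies `|o| ≥ d − s/2`; on the dyadic shell `2ʲ s < d ≤ 2ʲ⁺¹ s` the decay of a flat
filter with `F ≥ 2` then gives `Ĝ_o² ≤ 4⁻ʲ/9`, while `Ĝ_o² ≤ 1` always. Approximate pairwise
independence bounds the probability of the shell by `8 · 2ʲ s/n`, so for every `f' ≠ f`
`𝔼[Ĝ_o²] ≤ (8/B)(1 + ∑_{j ≥ 1} 2⁻ʲ/9) = 80/(9B)`, and summing against `|X̂_{f'}|²` gives the
claim. -/

lemma cdist_le (n : ℕ) (x : ZMod n) : cdist n x ≤ n :=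
  (min_le_right _ _).trans (Nat.sub_le _ _)

section Cdist

variable {n : ℕ} [NeZero n]

lemma cdist_eq_natAbs_valMinAbs (x : ZMod n) : cdist n x = x.valMinAbs.natAbs :=
  (ZMod.valMinAbs_natAbs_eq_min x).symm

lemma cdist_intCast_le (a : ℤ) : cdist n (a : ZMod n) ≤ a.natAbs := by
  rw [cdist_eq_natAbs_valMinAbs]
  exact ZMod.natAbs_min_of_le_div_two n _ a (by rw [ZMod.coe_valMinAbs])
    (ZMod.natAbs_valMinAbs_le _)

lemma cdist_neg (x : ZMod n) : cdist n (-x) = cdist n x := by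
  rw [cdist_eq_natAbs_valMinAbs, cdist_eq_natAbs_valMinAbs, ZMod.natAbs_valMinAbs_neg]

lemma cdist_add_le (x y : ZMod n) : cdist n (x + y) ≤ cdist n x + cdist n y := by
  simp only [cdist_eq_natAbs_valMinAbs]
  exact (ZMod.natAbs_valMinAbs_add_le x y).trans (Int.natAbs_add_le _ _)

end Cdist

section Rounding

variable {n B : ℕ} [NeZero n]

lemma two_mul_cdist_sub_roundMul_le (hBn : B ∣ n) (x : ZMod n) :
    2 * cdist n (x - roundMul n B x) ≤ n / B := by
  set s := n / B
  set r : ℤ := round ((x.val : ℚ) * B / n)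
  have hs : (s : ℚ) * ((x.val : ℚ) * B / n) = x.val := by
    have hB : (B : ℚ) * s = n := by exact_mod_cast Nat.mul_div_cancel' hBn
    have hn : (n : ℚ) ≠ 0 := by exact_mod_cast NeZero.ne n
    rw [show (s : ℚ) * (x.val * B / n) = x.val * (B * s) / n by ring, hB,
      mul_div_cancel_right₀ _ hn]
  have hrepr : x - roundMul n B x = (((x.val : ℤ) - s * r : ℤ) : ZMod n) := by
    rw [roundMul, Int.cast_sub, Int.cast_mul, Int.cast_natCast, Int.cast_natCast,
      ZMod.natCast_zmod_val]
  have herr : |(x.val : ℚ) - s * r| ≤ s / 2 := by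
    calc |(x.val : ℚ) - s * r| = |s * ((x.val : ℚ) * B / n - r)| := by rw [mul_sub, hs]
      _ = s * |(x.val : ℚ) * B / n - r| := by rw [abs_mul, abs_of_nonneg (Nat.cast_nonneg _)]
      _ ≤ s * (1 / 2) := by gcongr; exact abs_sub_round _
      _ = s / 2 := by ring
  have hnat : 2 * ((x.val : ℤ) - s * r).natAbs ≤ s := by
    have : (2 * ((x.val : ℤ) - s * r).natAbs : ℚ) ≤ s := by
      push_cast [Nat.cast_natAbs]
      linarith
    exact_mod_cast this
  rw [hrepr]
  exact (Nat.mul_le_mul_left 2 (cdist_intCast_le _)).trans hnat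

lemma two_mul_cdist_sub_le_offset (hBn : B ∣ n) (pf pf' : ZMod n) :
    2 * cdist n (pf - pf') ≤ n / B + 2 * cdist n (offset n B pf pf') := by
  have hsplit : pf - pf' = (pf - roundMul n B pf) + -offset n B pf pf' := by
    rw [offset]; ring
  have htri := cdist_add_le (pf - roundMul n B pf) (-offset n B pf pf')
  rw [← hsplit, cdist_neg] at htri
  have := two_mul_cdist_sub_roundMul_le hBn pf
  omega

end Rounding

namespace IsFlatFilter

variable {n B F : ℕ} [NeZero n] {G : ZMod n → ℝ}

lemma fhat_le_div (hG : IsFlatFilter n B F G) (hF : 2 ≤ F) {f : ZMod n}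
    (hf : (n : ℝ) / B ≤ cdist n f) : fhat n G f ≤ (n : ℝ) / B / (4 * cdist n f) := by
  set x := (n : ℝ) / B / (4 * cdist n f)
  have hx0 : 0 ≤ x := by positivity
  have hx1 : x ≤ 1 := div_le_one_of_le₀ (by linarith [(by positivity : (0 : ℝ) ≤ n / B)])
    (by positivity)
  calc fhat n G f ≤ (1 / 4 : ℝ) ^ (F - 1) * ((n : ℝ) / (B * cdist n f)) ^ (F - 1) :=
        hG.decay f hf
    _ = x ^ (F - 1) := by rw [← mul_pow]; congr 1; ring
    _ ≤ x := pow_le_of_le_one hx0 hx1 (by omega)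

lemma fhat_offset_sq_le (hG : IsFlatFilter n B F G) (hF : 2 ≤ F) (hBn : B ∣ n)
    {pf pf' : ZMod n} {j : ℕ} (hj : 1 ≤ j) (hd : 2 ^ j * (n / B) < cdist n (pf - pf')) :
    fhat n G (offset n B pf pf') ^ 2 ≤ (1 / 4 : ℝ) ^ j / 9 := by
  set s := n / B
  set c := cdist n (offset n B pf pf')
  have hB : 0 < B := Nat.pos_of_dvd_of_pos hBn (NeZero.pos n)
  have hs : (n : ℝ) / B = s := by
    rw [Nat.cast_div hBn (by exact_mod_cast hB.ne')]
  have hs1 : (1 : ℝ) ≤ s := by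
    exact_mod_cast (Nat.one_le_div_iff hB).mpr (Nat.le_of_dvd (NeZero.pos n) hBn)
  have h2j : (2 : ℝ) ≤ 2 ^ j := by
    simpa using pow_le_pow_right₀ (by norm_num : (1 : ℝ) ≤ 2) hj
  have hdR : (2 : ℝ) ^ j * s < cdist n (pf - pf') := by exact_mod_cast hd
  have hoff : 2 * (cdist n (pf - pf') : ℝ) ≤ s + 2 * c := by
    exact_mod_cast two_mul_cdist_sub_le_offset hBn pf pf'
  have hc : 3 * 2 ^ j * (s : ℝ) ≤ 4 * c := by nlinarith
  have hfhat : fhat n G (offset n B pf pf') ≤ 1 / (3 * 2 ^ j) := by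
    refine (hG.fhat_le_div hF (by rw [hs]; nlinarith)).trans ?_
    rw [hs, div_le_div_iff₀ (by nlinarith) (by positivity)]
    linarith
  calc fhat n G (offset n B pf pf') ^ 2 ≤ (1 / (3 * 2 ^ j)) ^ 2 :=
        pow_le_pow_left₀ (hG.nonneg _) hfhat 2
    _ = (1 / 4 : ℝ) ^ j / 9 := by
        rw [div_pow, mul_pow, ← pow_mul, mul_comm j 2, pow_mul, one_div_pow]; norm_num; ring

end IsFlatFilter

lemma exists_dyadic_shell (s : ℕ) {d : ℕ} :
    ∀ N, d ≤ 2 ^ (N + 1) * s → ∃ j ≤ N, d ≤ 2 ^ (j + 1) * s ∧ (j = 0 ∨ 2 ^ j * s < d)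
  | 0, h => ⟨0, le_rfl, h, Or.inl rfl⟩
  | N + 1, h => by
    by_cases hN : d ≤ 2 ^ (N + 1) * s
    · obtain ⟨j, hjN, hj⟩ := exists_dyadic_shell s N hN
      exact ⟨j, hjN.trans N.le_succ, hj⟩
    · exact ⟨N + 1, le_rfl, h, Or.inr (not_le.mp hN)⟩

/-- Dyadic layer cake: `Y ≤ w j` on the `j`-th shell of `d` and `ℙ[d ≤ t] ≤ c t` give
`𝔼[Y] ≤ 2cs ∑ⱼ w j 2ʲ`. -/
lemma sum_mul_le_of_dyadic_shells {Ω : Type*} [Fintype Ω] {μ : Ω → ℝ} (hμ : ∀ ω, 0 ≤ μ ω)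
    {d : Ω → ℕ} {Y : Ω → ℝ} {w : ℕ → ℝ} (hw : ∀ j, 0 ≤ w j) {s N : ℕ} {c : ℝ}
    (hdN : ∀ ω, d ω ≤ 2 ^ (N + 1) * s)
    (hY : ∀ ω j, (j = 0 ∨ 2 ^ j * s < d ω) → Y ω ≤ w j)
    (htail : ∀ t : ℕ, ∑ ω ∈ univ.filter (fun ω => d ω ≤ t), μ ω ≤ c * t) :
    ∑ ω, μ ω * Y ω ≤ 2 * c * s * ∑ j ∈ range (N + 1), w j * 2 ^ j := by
  have hpoint : ∀ ω, Y ω ≤ ∑ j ∈ range (N + 1), if d ω ≤ 2 ^ (j + 1) * s then w j else 0 := by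
    intro ω
    obtain ⟨j, hjN, hdj, hshell⟩ := exists_dyadic_shell s N (hdN ω)
    calc Y ω ≤ if d ω ≤ 2 ^ (j + 1) * s then w j else 0 := by rw [if_pos hdj]; exact hY ω j hshell
      _ ≤ _ := single_le_sum (f := fun j => if d ω ≤ 2 ^ (j + 1) * s then w j else 0)
          (fun i _ => by split_ifs; exacts [hw i, le_rfl]) (mem_range.mpr (Nat.lt_succ_of_le hjN))
  calc ∑ ω, μ ω * Y ω
      ≤ ∑ ω, μ ω * ∑ j ∈ range (N + 1), if d ω ≤ 2 ^ (j + 1) * s then w j else 0 :=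
        sum_le_sum fun ω _ => mul_le_mul_of_nonneg_left (hpoint ω) (hμ ω)
    _ = ∑ j ∈ range (N + 1), w j * ∑ ω ∈ univ.filter (fun ω => d ω ≤ 2 ^ (j + 1) * s), μ ω := by
        simp only [mul_sum, sum_filter]
        rw [sum_comm]
        refine sum_congr rfl fun j _ => sum_congr rfl fun ω _ => ?_
        split_ifs <;> ring
    _ ≤ ∑ j ∈ range (N + 1), w j * (c * (2 ^ (j + 1) * s : ℕ)) :=
        sum_le_sum fun j _ => mul_le_mul_of_nonneg_left (htail _) (hw j)
    _ = 2 * c * s * ∑ j ∈ range (N + 1), w j * 2 ^ j := by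
        rw [mul_sum]
        refine sum_congr rfl fun j _ => ?_
        push_cast
        ring

noncomputable def shellWeight (j : ℕ) : ℝ := if j = 0 then 1 else (1 / 4) ^ j / 9

lemma shellWeight_nonneg (j : ℕ) : 0 ≤ shellWeight j := by
  unfold shellWeight; split_ifs <;> positivity

lemma sum_range_shellWeight_mul_two_pow_le (N : ℕ) :
    ∑ j ∈ range (N + 1), shellWeight j * 2 ^ j ≤ 10 / 9 := by
  rw [sum_range_succ']
  have hgeom : ∑ j ∈ range N, (1 / 2 : ℝ) ^ j ≤ 2 := sum_geometric_two_le N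
  have hterm : ∀ j ∈ range N,
      shellWeight (j + 1) * 2 ^ (j + 1) = (1 / 2) ^ j / 18 := by
    intro j _
    rw [shellWeight, if_neg j.succ_ne_zero, div_mul_eq_mul_div, ← mul_pow]
    norm_num
    ring
  rw [sum_congr rfl hterm, ← sum_div, shellWeight]
  norm_num
  linarith

lemma expectation_fhat_offset_sq_le {n B F : ℕ} [NeZero n] (hBn : B ∣ n) (hF : 2 ≤ F)
    {G : ZMod n → ℝ} (hG : IsFlatFilter n B F G) {Ω : Type*} [Fintype Ω] {μ : Ω → ℝ}
    (hμ : ∀ ω, 0 ≤ μ ω) (π : Ω → (ZMod n ≃ ZMod n)) (f f' : ZMod n)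
    (hpair : ∀ t : ℕ,
      ∑ ω ∈ univ.filter (fun ω => cdist n (π ω f - π ω f') ≤ t), μ ω ≤ 4 * t / n) :
    ∑ ω, μ ω * fhat n G (offset n B (π ω f) (π ω f')) ^ 2 ≤ 10 / B := by
  have hB : 0 < B := Nat.pos_of_dvd_of_pos hBn (NeZero.pos n)
  have hs1 : 1 ≤ n / B := (Nat.one_le_div_iff hB).mpr (Nat.le_of_dvd (NeZero.pos n) hBn)
  have hdN : ∀ ω, cdist n (π ω f - π ω f') ≤ 2 ^ (n + 1) * (n / B) := fun ω =>
    calc cdist n (π ω f - π ω f') ≤ n := cdist_le n _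
      _ ≤ 2 ^ (n + 1) := (Nat.lt_two_pow_self.trans (Nat.pow_lt_pow_succ one_lt_two)).le
      _ ≤ 2 ^ (n + 1) * (n / B) := Nat.le_mul_of_pos_right _ hs1
  have hshell : ∀ ω j, (j = 0 ∨ 2 ^ j * (n / B) < cdist n (π ω f - π ω f')) →
      fhat n G (offset n B (π ω f) (π ω f')) ^ 2 ≤ shellWeight j := by
    intro ω j hj
    unfold shellWeight
    split_ifs with hj0
    · exact pow_le_one₀ (hG.nonneg _) (hG.le_one _)
    · exact hG.fhat_offset_sq_le hF hBn (Nat.one_le_iff_ne_zero.mpr hj0) (hj.resolve_left hj0)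
  have hs : ((n / B : ℕ) : ℝ) = n / B := Nat.cast_div hBn (by exact_mod_cast hB.ne')
  calc ∑ ω, μ ω * fhat n G (offset n B (π ω f) (π ω f')) ^ 2
      ≤ 2 * (4 / n) * (n / B : ℕ) * ∑ j ∈ range (n + 1), shellWeight j * 2 ^ j :=
        sum_mul_le_of_dyadic_shells hμ shellWeight_nonneg hdN hshell
          (fun t => (hpair t).trans_eq (by ring))
    _ ≤ 2 * (4 / n) * (n / B : ℕ) * (10 / 9) := by
        gcongr
        exact sum_range_shellWeight_mul_two_pow_le n
    _ ≤ 10 / B := by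
        rw [hs, show 2 * (4 / (n : ℝ)) * (n / B) * (10 / 9) = 80 / 9 / B by
          field_simp [(NeZero.ne n : n ≠ 0)]; norm_num]
        gcongr
        norm_num

theorem flat_filter_offset_energy_general (n B F : ℕ) [NeZero n]
    (hBn : B ∣ n) (hF : 2 ≤ F)
    (G : ZMod n → ℝ) (hG : IsFlatFilter n B F G)
    (Ω : Type) [Fintype Ω] (μ : Ω → ℝ) (hμ0 : ∀ ω, 0 ≤ μ ω)
    (π : Ω → (ZMod n ≃ ZMod n))
    (hpair : ∀ i i' : ZMod n, i ≠ i' → ∀ t : ℕ,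
      ∑ ω ∈ Finset.univ.filter (fun ω => cdist n (π ω i - π ω i') ≤ t), μ ω ≤
        4 * t / n)
    (X : ZMod n → ℂ) (f : ZMod n) :
    ∑ f' ∈ Finset.univ.filter (fun f' : ZMod n => f' ≠ f),
        ‖dft n X f'‖ ^ 2 *
          (∑ ω, μ ω * (fhat n G (offset n B (π ω f) (π ω f'))) ^ 2) ≤
      10 / B * ∑ f'' : ZMod n, ‖dft n X f''‖ ^ 2 := by
  calc ∑ f' ∈ univ.filter (fun f' : ZMod n => f' ≠ f),
        ‖dft n X f'‖ ^ 2 * (∑ ω, μ ω * (fhat n G (offset n B (π ω f) (π ω f'))) ^ 2)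
      ≤ ∑ f' ∈ univ.filter (fun f' : ZMod n => f' ≠ f), 10 / B * ‖dft n X f'‖ ^ 2 := by
        refine sum_le_sum fun f' hf' => ?_
        rw [mul_comm]
        gcongr
        exact expectation_fhat_offset_sq_le hBn hF hG hμ0 π f f'
          (hpair f f' (mem_filter.mp hf').2.symm)
    _ ≤ 10 / B * ∑ f'' : ZMod n, ‖dft n X f''‖ ^ 2 := by
        rw [← mul_sum]
        gcongr
        exact filter_subset _ _

/-- For any approximately pairwise-independent random permutation `π` (modeled on a
finite probability space `(Ω, μ)`), any `(n,B,F)`-flat filter `G`, any `X` and any `f`: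
`∑_{f' ≠ f} |X̂_{f'}|² E_π[|Ĝ_{o_f(f')}|²] ≤ (10/B)·‖X̂‖₂²`. -/
theorem flat_filter_offset_energy (n B F : ℕ) [NeZero n]
    (hn : ∃ k, n = 2 ^ k) (hB : ∃ k, B = 2 ^ k) (hBn : B ∣ n) (hF : 2 ≤ F)
    (G : ZMod n → ℝ) (hG : IsFlatFilter n B F G)
    (Ω : Type) [Fintype Ω] (μ : Ω → ℝ) (hμ0 : ∀ ω, 0 ≤ μ ω) (hμ1 : ∑ ω, μ ω = 1)
    (π : Ω → (ZMod n ≃ ZMod n))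
    (hpair : ∀ i i' : ZMod n, i ≠ i' → ∀ t : ℕ,
      ∑ ω ∈ Finset.univ.filter (fun ω => cdist n (π ω i - π ω i') ≤ t), μ ω ≤
        4 * t / n)
    (X : ZMod n → ℂ) (f : ZMod n) :
    ∑ f' ∈ Finset.univ.filter (fun f' : ZMod n => f' ≠ f),
        ‖dft n X f'‖ ^ 2 *
          (∑ ω, μ ω * (fhat n G (offset n B (π ω f) (π ω f'))) ^ 2) ≤
      10 / B * ∑ f'' : ZMod n, ‖dft n X f''‖ ^ 2 :=
  flat_filter_offset_energy_general n B F hBn hF G hG Ω μ hμ0 π hpair X f
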